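/- arXiv:1810.13150 — 3 statements merged into one kernel-verified Lean document; each statement's English description precedes it below -/
import Mathlib

section
/- Gap for the harmonic Kac operator: For every c' > 0 there exist constants c'' > 0 and W₀ such that for all W ≥ W₀, the self-adjoint integral operator on L²(ℝ²) with kernel e^{-c'|λ|²} · (W²/(2π)) e^{-½W²|λ-λ'|²} · e^{-c'|λ'|²} has L² operator norm at most 1 - c''/W. -/
/-!
Schur test with a Gaussian weight. For a nonnegative symmetric kernel `K` and a positive weight
`p` with `∫ K(x, y) p(y) dy ≤ Λ p(x)`, Cauchy–Schwarz against `p` and Tonelli give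
`‖K f‖₂ ≤ Λ ‖f‖₂`. For the harmonic Kac kernel take `p(y) = exp (-α |y|²)`: the Gaussian
convolution of a Gaussian is an explicit Gaussian, so the row integral equals
`W² / (W² + 2 (c + α)) · exp (-(c + k) |x|²)` with `k = (W²/2)(c + α) / (W²/2 + c + α)`.
The choice `α = √c W / 2` keeps `α ≤ c + k` (it amounts to `α² ≤ c² + c W²`) while making
`1 - Λ` of order `√c / W`.
-/

open MeasureTheory ENNReal Function Real

section Schur

variable {X : Type*} [MeasurableSpace X] {μ : Measure X}

theorem sq_lintegral_mul_le_of_weight {k g p : X → ℝ≥0∞} (hk : AEMeasurable k μ)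
    (hg : AEMeasurable g μ) (hp : AEMeasurable p μ) (hp0 : ∀ y, p y ≠ 0) (hp_top : ∀ y, p y ≠ ∞) :
    (∫⁻ y, k y * g y ∂μ) ^ 2 ≤ (∫⁻ y, k y * p y ∂μ) * ∫⁻ y, k y * (g y ^ 2 / p y) ∂μ := by
  set A : X → ℝ≥0∞ := fun y ↦ (k y * p y) ^ (2⁻¹ : ℝ)
  set B : X → ℝ≥0∞ := fun y ↦ (k y * (g y ^ 2 / p y)) ^ (2⁻¹ : ℝ)
  have hAB : ∀ y, k y * g y = A y * B y := fun y ↦ by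
    have : k y * p y * (k y * (g y ^ 2 / p y)) = (k y * g y) ^ (2 : ℝ) := by
      rw [mul_mul_mul_comm, ENNReal.mul_div_cancel (hp0 y) (hp_top y), ENNReal.rpow_two]; ring
    rw [← ENNReal.mul_rpow_of_nonneg _ _ (by norm_num), this, ENNReal.rpow_rpow_inv two_ne_zero]
  have hA : AEMeasurable A μ := (hk.mul hp).pow_const _
  have hB : AEMeasurable B μ := (hk.mul ((hg.pow_const 2).div hp)).pow_const _
  have holder := ENNReal.lintegral_mul_le_Lp_mul_Lq μ Real.HolderConjugate.two_two hA hB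
  simp only [Pi.mul_apply, A, B, ENNReal.rpow_inv_rpow two_ne_zero, ← hAB, one_div] at holder
  calc (∫⁻ y, k y * g y ∂μ) ^ 2
      ≤ ((∫⁻ y, k y * p y ∂μ) ^ (2⁻¹ : ℝ) * (∫⁻ y, k y * (g y ^ 2 / p y) ∂μ) ^ (2⁻¹ : ℝ)) ^ 2 :=
        pow_le_pow_left' holder 2
    _ = _ := by
        rw [← ENNReal.mul_rpow_of_nonneg _ _ (by norm_num), ← ENNReal.rpow_two,
          ENNReal.rpow_inv_rpow two_ne_zero]

theorem lintegral_sq_lintegral_le_of_schur [SFinite μ] {K : X → X → ℝ≥0∞}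
    (hK : Measurable (uncurry K)) {p : X → ℝ≥0∞} (hp : Measurable p) (hp0 : ∀ x, p x ≠ 0)
    (hp_top : ∀ x, p x ≠ ∞) {Λ : ℝ≥0∞} (hrow : ∀ x, ∫⁻ y, K x y * p y ∂μ ≤ Λ * p x)
    (hcol : ∀ y, ∫⁻ x, K x y * p x ∂μ ≤ Λ * p y) {g : X → ℝ≥0∞} (hg : AEMeasurable g μ) :
    ∫⁻ x, (∫⁻ y, K x y * g y ∂μ) ^ 2 ∂μ ≤ Λ ^ 2 * ∫⁻ x, g x ^ 2 ∂μ := by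
  set q : X → ℝ≥0∞ := fun y ↦ g y ^ 2 / p y
  have hF : AEMeasurable (uncurry fun x y ↦ K x y * p x * q y) (μ.prod μ) :=
    (hK.aemeasurable.mul hp.aemeasurable.comp_fst).mul
      ((hg.pow_const 2).div hp.aemeasurable).comp_snd
  calc ∫⁻ x, (∫⁻ y, K x y * g y ∂μ) ^ 2 ∂μ
      ≤ ∫⁻ x, Λ * (p x * ∫⁻ y, K x y * q y ∂μ) ∂μ := by
        refine lintegral_mono fun x ↦ ?_
        refine (sq_lintegral_mul_le_of_weight hK.of_uncurry_left.aemeasurable hg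
          hp.aemeasurable hp0 hp_top).trans ?_
        rw [← mul_assoc]
        gcongr
        exact hrow x
    _ = Λ * ∫⁻ x, ∫⁻ y, K x y * p x * q y ∂μ ∂μ := by
        simp_rw [← lintegral_const_mul' _ _ (hp_top _), mul_left_comm (p _), ← mul_assoc]
        exact lintegral_const_mul'' _ hF.lintegral_prod_right'
    _ = Λ * ∫⁻ y, (∫⁻ x, K x y * p x ∂μ) * q y ∂μ := by
        rw [lintegral_lintegral_swap hF]
        congr 1
        exact lintegral_congr fun y ↦ lintegral_mul_const _ (hK.of_uncurry_right.mul hp)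
    _ ≤ Λ * ∫⁻ y, Λ * p y * q y ∂μ := by
        gcongr with y
        exact hcol y
    _ = Λ ^ 2 * ∫⁻ x, g x ^ 2 ∂μ := by
        simp_rw [q, mul_assoc, ENNReal.mul_div_cancel (hp0 _) (hp_top _)]
        rw [lintegral_const_mul'' _ (hg.pow_const 2), ← mul_assoc, sq]

theorem eLpNorm_two_pow_two {ε : Type*} [ENorm ε] (f : X → ε) :
    eLpNorm f 2 μ ^ 2 = ∫⁻ x, ‖f x‖ₑ ^ 2 ∂μ := by
  simpa using eLpNorm_nnreal_pow_eq_lintegral (f := f) (μ := μ) (p := 2) two_ne_zero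

theorem eLpNorm_two_le_of_lintegral_sq_le {ε ε' : Type*} [ENorm ε] [ENorm ε'] {G : X → ε}
    {g : X → ε'} {C : ℝ≥0∞} (h : ∫⁻ x, ‖G x‖ₑ ^ 2 ∂μ ≤ C ^ 2 * ∫⁻ x, ‖g x‖ₑ ^ 2 ∂μ) :
    eLpNorm G 2 μ ≤ C * eLpNorm g 2 μ := by
  rwa [← ENNReal.pow_le_pow_left_iff two_ne_zero, mul_pow, eLpNorm_two_pow_two,
    eLpNorm_two_pow_two]

theorem eLpNorm_integral_smul_le_of_schur [SFinite μ] {E : Type*} [NormedAddCommGroup E]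
    [NormedSpace ℝ E] {K : X → X → ℝ} (hK0 : ∀ x y, 0 ≤ K x y) (hK : Measurable (uncurry K))
    {p : X → ℝ} (hp : Measurable p) (hp0 : ∀ x, 0 < p x) {Λ : ℝ}
    (hrow : ∀ x, ∫⁻ y, ENNReal.ofReal (K x y * p y) ∂μ ≤ ENNReal.ofReal (Λ * p x))
    (hcol : ∀ y, ∫⁻ x, ENNReal.ofReal (K x y * p x) ∂μ ≤ ENNReal.ofReal (Λ * p y))
    {f : X → E} (hf : AEStronglyMeasurable f μ) :
    eLpNorm (fun x ↦ ∫ y, K x y • f y ∂μ) 2 μ ≤ ENNReal.ofReal Λ * eLpNorm f 2 μ := by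
  have hKp : ∀ x y t, ENNReal.ofReal (K x y * t) = ENNReal.ofReal (K x y) * ENNReal.ofReal t :=
    fun x y _ ↦ ENNReal.ofReal_mul (hK0 x y)
  have hΛp : ∀ x, ENNReal.ofReal (Λ * p x) = ENNReal.ofReal Λ * ENNReal.ofReal (p x) :=
    fun x ↦ ENNReal.ofReal_mul' (hp0 x).le
  have hsq := lintegral_sq_lintegral_le_of_schur (μ := μ) (K := fun x y ↦ ENNReal.ofReal (K x y))
    (p := fun x ↦ ENNReal.ofReal (p x)) (ENNReal.measurable_ofReal.comp hK)
    (ENNReal.measurable_ofReal.comp hp) (fun x ↦ ENNReal.ofReal_ne_zero_iff.2 (hp0 x))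
    (fun _ ↦ ENNReal.ofReal_ne_top) (Λ := ENNReal.ofReal Λ)
    (fun x ↦ by simpa only [hKp, hΛp] using hrow x)
    (fun y ↦ by simpa only [hKp, hΛp] using hcol y) hf.enorm
  refine (eLpNorm_mono_enorm fun x ↦ ?_).trans (eLpNorm_two_le_of_lintegral_sq_le
    (G := fun x ↦ ∫⁻ y, ENNReal.ofReal (K x y) * ‖f y‖ₑ ∂μ) hsq)
  refine (enorm_integral_le_lintegral_enorm _).trans_eq (lintegral_congr fun y ↦ ?_)
  rw [enorm_smul, Real.enorm_eq_ofReal (hK0 x y)]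

end Schur

section Gaussian

variable {a b : ℝ}

theorem exp_neg_mul_sub_sq_mul_exp_neg_mul_sq (hab : a + b ≠ 0) (u v : ℝ) :
    exp (-a * (u - v) ^ 2) * exp (-b * v ^ 2)
      = exp (-(a + b) * (v - a * u / (a + b)) ^ 2) * exp (-(a * b / (a + b)) * u ^ 2) := by
  rw [← exp_add, ← exp_add]
  congr 1
  field_simp
  ring

theorem integral_exp_neg_mul_sub_sq_mul_exp_neg_mul_sq (hab : a + b ≠ 0) (u : ℝ) :
    ∫ v, exp (-a * (u - v) ^ 2) * exp (-b * v ^ 2)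
      = √(π / (a + b)) * exp (-(a * b / (a + b)) * u ^ 2) := by
  simp_rw [exp_neg_mul_sub_sq_mul_exp_neg_mul_sq hab u]
  rw [integral_mul_const, integral_sub_right_eq_self (fun v ↦ exp (-(a + b) * v ^ 2)),
    integral_gaussian]

theorem lintegral_exp_neg_mul_sub_sq_mul_exp_neg_mul_sq (hab : 0 < a + b) (u : ℝ) :
    ∫⁻ v, ENNReal.ofReal (exp (-a * (u - v) ^ 2) * exp (-b * v ^ 2))
      = ENNReal.ofReal (√(π / (a + b)) * exp (-(a * b / (a + b)) * u ^ 2)) := by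
  rw [← integral_exp_neg_mul_sub_sq_mul_exp_neg_mul_sq hab.ne' u,
    ofReal_integral_eq_lintegral_ofReal _ (ae_of_all _ fun v ↦ by positivity)]
  simp_rw [exp_neg_mul_sub_sq_mul_exp_neg_mul_sq hab.ne' u]
  exact ((integrable_exp_neg_mul_sq hab).comp_sub_right _).mul_const _

theorem lintegral_prod_exp_neg_mul_sub_sq_mul_exp_neg_mul_sq (hab : 0 < a + b) (x : ℝ × ℝ) :
    ∫⁻ y : ℝ × ℝ, ENNReal.ofReal
        (exp (-a * ((x.1 - y.1) ^ 2 + (x.2 - y.2) ^ 2)) * exp (-b * (y.1 ^ 2 + y.2 ^ 2)))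
      = ENNReal.ofReal (π / (a + b) * exp (-(a * b / (a + b)) * (x.1 ^ 2 + x.2 ^ 2))) := by
  set g : ℝ → ℝ → ℝ := fun u v ↦ exp (-a * (u - v) ^ 2) * exp (-b * v ^ 2)
  have hsplit : ∀ y : ℝ × ℝ,
      exp (-a * ((x.1 - y.1) ^ 2 + (x.2 - y.2) ^ 2)) * exp (-b * (y.1 ^ 2 + y.2 ^ 2))
        = g x.1 y.1 * g x.2 y.2 := fun y ↦ by
    simp only [g, ← exp_add]
    ring_nf
  have hg : ∀ u, Measurable fun v ↦ ENNReal.ofReal (g u v) := fun u ↦ by fun_prop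
  simp_rw [hsplit, ENNReal.ofReal_mul (by positivity : 0 ≤ g _ _)]
  rw [Measure.volume_eq_prod, lintegral_prod_mul (hg _).aemeasurable (hg _).aemeasurable,
    lintegral_exp_neg_mul_sub_sq_mul_exp_neg_mul_sq hab,
    lintegral_exp_neg_mul_sub_sq_mul_exp_neg_mul_sq hab, ← ENNReal.ofReal_mul (by positivity)]
  congr 1
  have hsq : √(π / (a + b)) * √(π / (a + b)) = π / (a + b) := mul_self_sqrt (by positivity)
  rw [mul_add, exp_add]
  linear_combination
    exp (-(a * b / (a + b)) * x.1 ^ 2) * exp (-(a * b / (a + b)) * x.2 ^ 2) * hsq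

end Gaussian

noncomputable def harmonicKacKernel (c W : ℝ) (x y : ℝ × ℝ) : ℝ :=
  exp (-c * (x.1 ^ 2 + x.2 ^ 2)) * (W ^ 2 / (2 * π)) *
    exp (-(1 / 2) * W ^ 2 * ((x.1 - y.1) ^ 2 + (x.2 - y.2) ^ 2)) * exp (-c * (y.1 ^ 2 + y.2 ^ 2))

namespace harmonicKacKernel

variable (c W : ℝ)

theorem nonneg (x y : ℝ × ℝ) : 0 ≤ harmonicKacKernel c W x y := by
  unfold harmonicKacKernel; positivity

theorem comm (x y : ℝ × ℝ) : harmonicKacKernel c W x y = harmonicKacKernel c W y x := by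
  unfold harmonicKacKernel; ring_nf

theorem measurable_uncurry : Measurable (uncurry (harmonicKacKernel c W)) := by
  unfold harmonicKacKernel; fun_prop

theorem lintegral_mul_exp {α : ℝ} (h : 0 < W ^ 2 / 2 + (c + α)) (x : ℝ × ℝ) :
    ∫⁻ y, ENNReal.ofReal (harmonicKacKernel c W x y * exp (-α * (y.1 ^ 2 + y.2 ^ 2)))
      = ENNReal.ofReal (W ^ 2 / (W ^ 2 + 2 * (c + α)) *
          exp (-(c + W ^ 2 / 2 * (c + α) / (W ^ 2 / 2 + (c + α))) * (x.1 ^ 2 + x.2 ^ 2))) := by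
  have hsplit : ∀ y : ℝ × ℝ, harmonicKacKernel c W x y * exp (-α * (y.1 ^ 2 + y.2 ^ 2))
      = exp (-c * (x.1 ^ 2 + x.2 ^ 2)) * (W ^ 2 / (2 * π)) *
        (exp (-(W ^ 2 / 2) * ((x.1 - y.1) ^ 2 + (x.2 - y.2) ^ 2)) *
          exp (-(c + α) * (y.1 ^ 2 + y.2 ^ 2))) := fun y ↦ by
    simp only [harmonicKacKernel, mul_assoc, ← exp_add]
    ring_nf
  simp_rw [hsplit,
    ENNReal.ofReal_mul (by positivity : 0 ≤ exp (-c * (x.1 ^ 2 + x.2 ^ 2)) * (W ^ 2 / (2 * π)))]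
  rw [lintegral_const_mul' _ _ ENNReal.ofReal_ne_top,
    lintegral_prod_exp_neg_mul_sub_sq_mul_exp_neg_mul_sq h, ← ENNReal.ofReal_mul (by positivity)]
  congr 1
  rw [neg_add, add_mul, exp_add]
  field_simp

variable {c W}

theorem lintegral_mul_exp_le (hc : 0 < c) (hW : √c ≤ W) (x : ℝ × ℝ) :
    ∫⁻ y, ENNReal.ofReal (harmonicKacKernel c W x y * exp (-(√c * W / 2) * (y.1 ^ 2 + y.2 ^ 2)))
      ≤ ENNReal.ofReal ((1 - √c / 2 / W) * exp (-(√c * W / 2) * (x.1 ^ 2 + x.2 ^ 2))) := by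
  have hs : 0 < √c := sqrt_pos.2 hc
  have hW0 : 0 < W := hs.trans_le hW
  have hs2 : √c ^ 2 = c := sq_sqrt hc.le
  set α := √c * W / 2 with hα
  have hα2 : α ^ 2 = c * W ^ 2 / 4 := by rw [hα, div_pow, mul_pow, hs2]; ring
  have hD : 0 < W ^ 2 / 2 + (c + α) := by positivity
  have hΛ : W ^ 2 / (W ^ 2 + 2 * (c + α)) ≤ 1 - √c / 2 / W := by
    rw [show 1 - √c / 2 / W = (2 * W - √c) / (2 * W) by field_simp,
      div_le_div_iff₀ (by positivity) (by positivity), hα]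
    nlinarith [mul_le_mul_of_nonneg_left hW hc.le, mul_pos hs hW0, mul_pos hc hW0]
  have hexp : α ≤ c + W ^ 2 / 2 * (c + α) / (W ^ 2 / 2 + (c + α)) := by
    rw [← sub_le_iff_le_add', le_div_iff₀ hD]
    nlinarith [sq_nonneg c, mul_nonneg hc.le (sq_nonneg W)]
  rw [lintegral_mul_exp c W hD]
  refine ENNReal.ofReal_le_ofReal (mul_le_mul hΛ (exp_le_exp.2 ?_) (exp_pos _).le
    ((by positivity : (0 : ℝ) ≤ _).trans hΛ))
  nlinarith [mul_le_mul_of_nonneg_right hexp (by positivity : 0 ≤ x.1 ^ 2 + x.2 ^ 2)]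

end harmonicKacKernel

/-- Spectral gap for the harmonic Kac operator `e^{-c'λ²} δ*_{W²} e^{-c'λ²}` on `L²(ℝ²)`. -/
theorem stmt10 (c' : ℝ) (hc' : 0 < c') : ∃ c'' > (0:ℝ), ∃ W₀ : ℝ, ∀ W : ℝ, W₀ ≤ W →
    ∀ f : (ℝ × ℝ) → ℝ, MemLp f 2 (volume : Measure (ℝ × ℝ)) →
      eLpNorm (fun x : ℝ × ℝ => ∫ y : ℝ × ℝ,
          Real.exp (-c'*(x.1^2+x.2^2)) * (W^2/(2*Real.pi)) *
            Real.exp (-(1/2)*W^2*((x.1-y.1)^2 + (x.2-y.2)^2)) *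
            Real.exp (-c'*(y.1^2+y.2^2)) * f y ∂(volume : Measure (ℝ × ℝ)))
          2 (volume : Measure (ℝ × ℝ))
        ≤ ENNReal.ofReal (1 - c''/W) * eLpNorm f 2 (volume : Measure (ℝ × ℝ)) := by
  refine ⟨√c' / 2, by positivity, √c', fun W hW f hf ↦ ?_⟩
  have hrow := harmonicKacKernel.lintegral_mul_exp_le hc' hW
  exact eLpNorm_integral_smul_le_of_schur (harmonicKacKernel.nonneg c' W)
    (harmonicKacKernel.measurable_uncurry c' W) (by fun_prop) (fun _ ↦ exp_pos _) hrow
    (fun y ↦ by simpa only [harmonicKacKernel.comm c' W _ y] using hrow y) hf.aestronglyMeasurable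
end

section
/- Combes–Thomas estimate: Let H be a self-adjoint operator on ℓ²(ℤ) (or ℓ²({1,…,N})) with matrix elements H_{xy}, and suppose sup_x Σ_y |H_{xy}|·(e^{δ|x-y|} - 1) ≤ S for some δ > 0, S > 0. Then for every real E and ε > 0 with ε ≥ 2S·μ for some μ ∈ (0,1], the Green function G_{xy} = ((E + iε - H)^{-1})_{xy} satisfies |G_{xy}| ≤ (2/ε)·e^{-μδ|x-y|} for all x, y. -/
/-!
Fix `x`, `y` and the weight `w t = min (μ δ d(t, y)) (μ δ d(x, y))`, which is bounded and
`μ δ`-Lipschitz. Conjugating `H` by multiplication with `e^w` changes it by an operator `K` with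
entries `(e^{w s - w t} - 1) H_st`; by convexity of `exp`,
`|e^{w s - w t} - 1| ≤ μ (e^{δ d(s, t)} - 1)`, so the Schur test gives `‖K‖ ≤ μ S ≤ ε / 2`.
Since `‖(z - H) v‖ ≥ ε ‖v‖` for self-adjoint `H` and `Im z = ε`, the conjugated resolvent
`R = e^w G e^{-w}` has norm at most `2 / ε`, and `G_xy = e^{-μ δ d(x, y)} R_xy`.
-/

open scoped lp ComplexConjugate ENNReal

namespace CombesThomas

lemma abs_exp_sub_one_le_exp_abs_sub_one (t : ℝ) : |Real.exp t - 1| ≤ Real.exp |t| - 1 := by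
  rcases le_total 0 t with ht | ht
  · rw [abs_of_nonneg ht, abs_of_nonneg (by linarith [Real.one_le_exp ht])]
  · rw [abs_of_nonpos ht, abs_of_nonpos (by linarith [Real.exp_le_one_iff.mpr ht])]
    linarith [Real.add_one_le_exp t, Real.add_one_le_exp (-t)]

lemma exp_mul_sub_one_le {μ : ℝ} (hμ₀ : 0 ≤ μ) (hμ₁ : μ ≤ 1) (u : ℝ) :
    Real.exp (μ * u) - 1 ≤ μ * (Real.exp u - 1) := by
  have := convexOn_exp.2 (Set.mem_univ 0) (Set.mem_univ u) (sub_nonneg.2 hμ₁) hμ₀ (by ring)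
  simp only [smul_eq_mul, mul_zero, zero_add, Real.exp_zero, mul_one] at this
  linarith

lemma abs_exp_sub_one_le_mul {t u μ : ℝ} (hμ₀ : 0 ≤ μ) (hμ₁ : μ ≤ 1) (ht : |t| ≤ μ * u) :
    |Real.exp t - 1| ≤ μ * (Real.exp u - 1) :=
  calc |Real.exp t - 1| ≤ Real.exp |t| - 1 := abs_exp_sub_one_le_exp_abs_sub_one t
    _ ≤ Real.exp (μ * u) - 1 := by gcongr
    _ ≤ μ * (Real.exp u - 1) := exp_mul_sub_one_le hμ₀ hμ₁ u

lemma abs_min_sub_min_le_mul_dist {ι : Type*} [PseudoMetricSpace ι] {c : ℝ} (hc : 0 ≤ c)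
    (y : ι) (n : ℝ) (s t : ι) :
    |min (c * dist s y) n - min (c * dist t y) n| ≤ c * dist s t := by
  refine (abs_min_sub_min_le_max _ _ _ _).trans ?_
  rw [sub_self, abs_zero, max_le_iff, ← mul_sub, abs_mul, abs_of_nonneg hc]
  exact ⟨by gcongr; exact abs_dist_sub_le s t y, by positivity⟩

lemma sq_tsum_mul_le {ι : Type*} {a b : ι → ℝ} (ha : ∀ i, 0 ≤ a i) (hsa : Summable a)
    (hsab : Summable fun i => a i * b i) (hsab2 : Summable fun i => a i * b i ^ 2) :
    (∑' i, a i * b i) ^ 2 ≤ (∑' i, a i) * ∑' i, a i * b i ^ 2 :=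
  le_of_tendsto_of_tendsto' (hsab.hasSum.pow 2) (Filter.Tendsto.mul hsa.hasSum hsab2.hasSum)
    fun s =>
      Finset.sum_sq_le_sum_mul_sum_of_sq_le_mul s (r := fun i => a i * b i) (f := a)
        (g := fun i => a i * b i ^ 2) (fun i _ => ha i)
        (fun i _ => mul_nonneg (ha i) (sq_nonneg _)) fun i _ => (by ring : _ = _).le

lemma mul_norm_le_of_sub_comp_eq_id {𝕜 E : Type*} [NontriviallyNormedField 𝕜]
    [SeminormedAddCommGroup E] [NormedSpace 𝕜 E] {A K R : E →L[𝕜] E} {a b : ℝ}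
    (hA : ∀ v, a * ‖v‖ ≤ ‖A v‖) (hK : ∀ v, ‖K v‖ ≤ b * ‖v‖)
    (hR : (A - K) ∘L R = ContinuousLinearMap.id 𝕜 E) (v : E) : (a - b) * ‖R v‖ ≤ ‖v‖ :=
  calc (a - b) * ‖R v‖ ≤ ‖A (R v)‖ - ‖K (R v)‖ := by linarith [hA (R v), hK (R v)]
    _ ≤ ‖A (R v) - K (R v)‖ := norm_sub_norm_le _ _
    _ = ‖v‖ := by rw [← sub_apply, ← ContinuousLinearMap.comp_apply, hR]; rfl

section SelfAdjoint

variable {E : Type*} [NormedAddCommGroup E] [InnerProductSpace ℂ E] [CompleteSpace E]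

lemma abs_im_mul_norm_le_norm_smul_sub {T : E →L[ℂ] E} (hT : IsSelfAdjoint T) (z : ℂ) (v : E) :
    |z.im| * ‖v‖ ≤ ‖z • v - T v‖ := by
  have him : (inner ℂ v (z • v - T v)).im = z.im * ‖v‖ ^ 2 := by
    have hreal : (inner ℂ v (T v)).im = 0 := by
      simpa using hT.isSymmetric.im_inner_self_apply v
    rw [inner_sub_right, inner_smul_right, inner_self_eq_norm_sq_to_K, Complex.sub_im, hreal]
    simp [← Complex.ofReal_pow]
  have key : |z.im| * ‖v‖ ^ 2 ≤ ‖v‖ * ‖z • v - T v‖ :=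
    calc |z.im| * ‖v‖ ^ 2 = |(inner ℂ v (z • v - T v)).im| := by rw [him, abs_mul, abs_sq]
      _ ≤ ‖inner ℂ v (z • v - T v)‖ := Complex.abs_im_le_norm _
      _ ≤ ‖v‖ * ‖z • v - T v‖ := norm_inner_le_norm _ _
  rcases (norm_nonneg v).eq_or_lt with hv | hv
  · simp [← hv]
  · nlinarith

lemma exists_inverse_smul_id_sub {T : E →L[ℂ] E} (hT : IsSelfAdjoint T) {z : ℂ}
    (hz : z.im ≠ 0) :
    ∃ G : E →L[ℂ] E, (z • ContinuousLinearMap.id ℂ E - T) ∘L G = ContinuousLinearMap.id ℂ E ∧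
      G ∘L (z • ContinuousLinearMap.id ℂ E - T) = ContinuousLinearMap.id ℂ E := by
  obtain ⟨u, hu⟩ : IsUnit (algebraMap ℂ (E →L[ℂ] E) z - T) :=
    spectrum.notMem_iff.1 fun h => hz (hT.im_eq_zero_of_mem_spectrum h)
  have hA : z • ContinuousLinearMap.id ℂ E - T = ↑u := by
    rw [hu, Algebra.algebraMap_eq_smul_one]; rfl
  exact ⟨↑u⁻¹, hA ▸ u.mul_inv, hA ▸ u.inv_mul⟩

end SelfAdjoint

noncomputable section

section Lp

variable {ι : Type*}

lemma summable_norm_sq (u : ℓ²(ι, ℂ)) : Summable fun i => ‖u i‖ ^ 2 := by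
  simpa using (lp.memℓp u).summable (by norm_num)

lemma tsum_norm_sq (u : ℓ²(ι, ℂ)) : ∑' i, ‖u i‖ ^ 2 = ‖u‖ ^ 2 := by
  simpa using (lp.norm_rpow_eq_tsum (by norm_num) u).symm

lemma norm_le_of_forall_sum_norm_sq_le {u : ℓ²(ι, ℂ)} {C : ℝ} (hC : 0 ≤ C)
    (hu : ∀ s : Finset ι, ∑ i ∈ s, ‖u i‖ ^ 2 ≤ C ^ 2) : ‖u‖ ≤ C :=
  lp.norm_le_of_forall_sum_le (by norm_num) hC (by simpa using hu)

lemma norm_mul_apply_le (m : ℓ^∞(ι, ℂ)) (u : ℓ²(ι, ℂ)) (i : ι) : ‖m i * u i‖ ≤ ‖m‖ * ‖u i‖ := by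
  rw [norm_mul]; gcongr; exact lp.norm_apply_le_norm ENNReal.top_ne_zero m i

def mulCLM (m : ℓ^∞(ι, ℂ)) : ℓ²(ι, ℂ) →L[ℂ] ℓ²(ι, ℂ) :=
  LinearMap.mkContinuous
    { toFun := fun u => ⟨fun i => m i * u i,
        ((lp.memℓp u).norm.const_mul ‖m‖).mono (norm_mul_apply_le m u)⟩
      map_add' := fun u v => lp.ext (funext fun i => mul_add (m i) (u i) (v i))
      map_smul' := fun c u => lp.ext (funext fun i => mul_left_comm (m i) c (u i)) }
    ‖m‖ fun u =>
      calc _ ≤ ‖(‖m‖ : ℂ) • u‖ := lp.norm_mono two_ne_zero fun i => by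
            change ‖m i * u i‖ ≤ _
            rw [lp.coeFn_smul, Pi.smul_apply, norm_smul, Complex.norm_real, norm_norm]
            exact norm_mul_apply_le m u i
        _ = ‖m‖ * ‖u‖ := by rw [norm_smul]; simp

@[simp]
lemma mulCLM_apply (m : ℓ^∞(ι, ℂ)) (u : ℓ²(ι, ℂ)) (i : ι) : mulCLM m u i = m i * u i := rfl

lemma mulCLM_comp_mulCLM {f g : ℓ^∞(ι, ℂ)} (hfg : ∀ i, f i * g i = 1) :
    mulCLM f ∘L mulCLM g = ContinuousLinearMap.id ℂ ℓ²(ι, ℂ) := by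
  ext u i
  simp [← mul_assoc, hfg]

lemma conj_resolvent_comp_conj {H G : ℓ²(ι, ℂ) →L[ℂ] ℓ²(ι, ℂ)} {z : ℂ}
    (hG : (z • ContinuousLinearMap.id ℂ ℓ²(ι, ℂ) - H) ∘L G = ContinuousLinearMap.id ℂ ℓ²(ι, ℂ))
    {f g : ℓ^∞(ι, ℂ)} (hfg : ∀ i, f i * g i = 1) :
    (z • ContinuousLinearMap.id ℂ ℓ²(ι, ℂ) - H - (mulCLM f ∘L H ∘L mulCLM g - H)) ∘L
      (mulCLM f ∘L G ∘L mulCLM g) = ContinuousLinearMap.id ℂ ℓ²(ι, ℂ) := by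
  have hfg' (u : ℓ²(ι, ℂ)) : mulCLM f (mulCLM g u) = u :=
    DFunLike.congr_fun (mulCLM_comp_mulCLM hfg) u
  have hgf' (u : ℓ²(ι, ℂ)) : mulCLM g (mulCLM f u) = u :=
    DFunLike.congr_fun (mulCLM_comp_mulCLM fun i => mul_comm (g i) (f i) ▸ hfg i) u
  have hG' (u : ℓ²(ι, ℂ)) : z • G u - H (G u) = u := DFunLike.congr_fun hG u
  ext1 v
  calc _ = mulCLM f (z • G (mulCLM g v) - H (G (mulCLM g v))) := by
        simp only [ContinuousLinearMap.comp_apply, sub_apply, smul_apply,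
          ContinuousLinearMap.id_apply, hgf', map_sub, map_smul]
        abel
    _ = v := by rw [hG', hfg']

def expWeight (w : ι → ℝ) (hw : BddAbove (Set.range w)) : ℓ^∞(ι, ℂ) :=
  ⟨fun i => (Real.exp (w i) : ℂ), memℓp_infty <| by
    simp only [Complex.norm_real, Real.norm_eq_abs, Real.abs_exp]
    exact Set.range_comp Real.exp w ▸ Real.exp_monotone.map_bddAbove hw⟩

@[simp]
lemma expWeight_apply (w : ι → ℝ) (hw : BddAbove (Set.range w)) (i : ι) :
    expWeight w hw i = Real.exp (w i) := rfl

variable [DecidableEq ι]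

def entry (T : ℓ²(ι, ℂ) →L[ℂ] ℓ²(ι, ℂ)) (x y : ι) : ℂ := T (lp.single 2 y 1) x

lemma entry_sub (S T : ℓ²(ι, ℂ) →L[ℂ] ℓ²(ι, ℂ)) (x y : ι) :
    entry (S - T) x y = entry S x y - entry T x y := rfl

lemma hasSum_entry_mul (T : ℓ²(ι, ℂ) →L[ℂ] ℓ²(ι, ℂ)) (u : ℓ²(ι, ℂ)) (x : ι) :
    HasSum (fun y => entry T x y * u y) (T u x) := by
  have hy (y : ι) :
      (lp.evalCLM ℂ (fun _ => ℂ) 2 x ∘L T) (lp.single 2 y (u y)) = entry T x y * u y := by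
    have : (lp.single 2 y (u y) : ℓ²(ι, ℂ)) = u y • lp.single 2 y (1 : ℂ) := by
      rw [← lp.single_smul, smul_eq_mul, mul_one]
    rw [this, map_smul, smul_eq_mul, mul_comm]
    rfl
  have h := (lp.hasSum_single ENNReal.ofNat_ne_top u).mapL (lp.evalCLM ℂ (fun _ => ℂ) 2 x ∘L T)
  simp only [hy] at h
  exact h

lemma isSelfAdjoint_of_entry_eq_conj {T : ℓ²(ι, ℂ) →L[ℂ] ℓ²(ι, ℂ)}
    (hT : ∀ x y, entry T x y = conj (entry T y x)) : IsSelfAdjoint T := by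
  rw [ContinuousLinearMap.isSelfAdjoint_iff']
  refine lp.ext_continuousLinearMap ENNReal.ofNat_ne_top fun y => ?_
  refine ContinuousLinearMap.ext_ring (lp.ext (funext fun x => ?_))
  calc T.adjoint (lp.single 2 y 1) x
      = inner ℂ (lp.single 2 x (1 : ℂ)) (T.adjoint (lp.single 2 y 1)) := by
        simp [lp.inner_single_left]
    _ = inner ℂ (T (lp.single 2 x 1)) (lp.single 2 y (1 : ℂ)) := T.adjoint_inner_right _ _
    _ = conj (entry T y x) := by simp [lp.inner_single_right, entry]
    _ = T (lp.single 2 y 1) x := (hT x y).symm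

lemma mulCLM_single (m : ℓ^∞(ι, ℂ)) (j : ι) (c : ℂ) :
    mulCLM m (lp.single 2 j c) = lp.single 2 j (m j * c) := by
  ext i
  by_cases h : i = j
  · subst h; simp
  · simp [h]

lemma entry_mulCLM_comp_comp_mulCLM (f g : ℓ^∞(ι, ℂ)) (T : ℓ²(ι, ℂ) →L[ℂ] ℓ²(ι, ℂ)) (x y : ι) :
    entry (mulCLM f ∘L T ∘L mulCLM g) x y = f x * entry T x y * g y := by
  have : (lp.single 2 y (g y * 1) : ℓ²(ι, ℂ)) = g y • lp.single 2 y 1 := by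
    rw [← lp.single_smul, smul_eq_mul]
  simp only [entry, ContinuousLinearMap.comp_apply, mulCLM_single, this, map_smul]
  rw [lp.coeFn_smul, Pi.smul_apply, mulCLM_apply, smul_eq_mul]
  ring

lemma norm_apply_le_tsum_of_norm_entry_le (K : ℓ²(ι, ℂ) →L[ℂ] ℓ²(ι, ℂ)) {a : ι → ι → ℝ}
    (hK : ∀ x y, ‖entry K x y‖ ≤ a x y) (u : ℓ²(ι, ℂ)) (x : ι)
    (hsum : Summable fun y => a x y * ‖u y‖) : ‖K u x‖ ≤ ∑' y, a x y * ‖u y‖ :=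
  (hasSum_entry_mul K u x).norm_le_of_bounded hsum.hasSum fun y => by
    rw [norm_mul]; gcongr; exact hK x y

/-- Schur test. -/
theorem norm_apply_le_of_norm_entry_le {K : ℓ²(ι, ℂ) →L[ℂ] ℓ²(ι, ℂ)} {a : ι → ι → ℝ} {C : ℝ}
    (hC : 0 ≤ C) (ha : ∀ x y, 0 ≤ a x y) (ha_symm : ∀ x y, a x y = a y x)
    (ha_sum : ∀ x, Summable (a x)) (ha_row : ∀ x, ∑' y, a x y ≤ C)
    (hK : ∀ x y, ‖entry K x y‖ ≤ a x y) (u : ℓ²(ι, ℂ)) : ‖K u‖ ≤ C * ‖u‖ := by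
  have hu (y : ι) : ‖u y‖ ≤ ‖u‖ := lp.norm_apply_le_norm two_ne_zero u y
  have hsum₁ (x : ι) : Summable fun y => a x y * ‖u y‖ :=
    ((ha_sum x).mul_right ‖u‖).of_nonneg_of_le (fun y => mul_nonneg (ha x y) (norm_nonneg _))
      fun y => by gcongr; exacts [ha x y, hu y]
  have hsum₂ (x : ι) : Summable fun y => a x y * ‖u y‖ ^ 2 :=
    ((ha_sum x).mul_right (‖u‖ ^ 2)).of_nonneg_of_le (fun y => mul_nonneg (ha x y) (sq_nonneg _))
      fun y => by gcongr; exacts [ha x y, hu y]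
  have hrow (x : ι) : ‖K u x‖ ^ 2 ≤ C * ∑' y, a x y * ‖u y‖ ^ 2 :=
    calc ‖K u x‖ ^ 2 ≤ (∑' y, a x y * ‖u y‖) ^ 2 := by
          gcongr; exact norm_apply_le_tsum_of_norm_entry_le K hK u x (hsum₁ x)
      _ ≤ (∑' y, a x y) * ∑' y, a x y * ‖u y‖ ^ 2 :=
          sq_tsum_mul_le (ha x) (ha_sum x) (hsum₁ x) (hsum₂ x)
      _ ≤ C * ∑' y, a x y * ‖u y‖ ^ 2 := by
          gcongr
          · exact tsum_nonneg fun y => mul_nonneg (ha x y) (sq_nonneg _)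
          · exact ha_row x
  have hcol (s : Finset ι) (y : ι) : ∑ x ∈ s, a x y ≤ C := by
    simp only [ha_symm _ y]
    exact (Summable.sum_le_tsum s (fun x _ => ha y x) (ha_sum y)).trans (ha_row y)
  refine norm_le_of_forall_sum_norm_sq_le (by positivity) fun s => ?_
  calc ∑ x ∈ s, ‖K u x‖ ^ 2 ≤ ∑ x ∈ s, C * ∑' y, a x y * ‖u y‖ ^ 2 :=
        Finset.sum_le_sum fun x _ => hrow x
    _ = C * ∑' y, (∑ x ∈ s, a x y) * ‖u y‖ ^ 2 := by
        rw [← Finset.mul_sum, ← Summable.tsum_finsetSum fun x _ => hsum₂ x]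
        simp only [Finset.sum_mul]
    _ ≤ C * ∑' y, C * ‖u y‖ ^ 2 := by
        gcongr
        · simpa only [Finset.sum_mul] using summable_sum fun x _ => hsum₂ x
        · exact (summable_norm_sq u).mul_left C
        · exact hcol s _
    _ = (C * ‖u‖) ^ 2 := by rw [tsum_mul_left, tsum_norm_sq]; ring

end Lp

section Metric

variable {ι : Type*} [PseudoMetricSpace ι] [DecidableEq ι]

def expExcess (H : ℓ²(ι, ℂ) →L[ℂ] ℓ²(ι, ℂ)) (δ : ℝ) (x y : ι) : ℝ :=
  ‖entry H x y‖ * (Real.exp (δ * dist x y) - 1)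

lemma expExcess_nonneg (H : ℓ²(ι, ℂ) →L[ℂ] ℓ²(ι, ℂ)) {δ : ℝ} (hδ : 0 ≤ δ) (x y : ι) :
    0 ≤ expExcess H δ x y :=
  mul_nonneg (norm_nonneg _) (sub_nonneg.2 (Real.one_le_exp (by positivity)))

lemma expExcess_comm {H : ℓ²(ι, ℂ) →L[ℂ] ℓ²(ι, ℂ)} (hH : ∀ x y, entry H x y = conj (entry H y x))
    (δ : ℝ) (x y : ι) : expExcess H δ x y = expExcess H δ y x := by
  rw [expExcess, expExcess, hH x y, Complex.norm_conj, dist_comm]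

lemma norm_apply_le_of_norm_entry_le_expExcess {H K : ℓ²(ι, ℂ) →L[ℂ] ℓ²(ι, ℂ)} {δ S μ : ℝ}
    (hH : ∀ x y, entry H x y = conj (entry H y x)) (hδ : 0 ≤ δ) (hS : 0 ≤ S) (hμ : 0 ≤ μ)
    (hsum : ∀ x, Summable (expExcess H δ x)) (hbound : ∀ x, ∑' y, expExcess H δ x y ≤ S)
    (hK : ∀ x y, ‖entry K x y‖ ≤ μ * expExcess H δ x y) (v : ℓ²(ι, ℂ)) :
    ‖K v‖ ≤ μ * S * ‖v‖ :=
  norm_apply_le_of_norm_entry_le (mul_nonneg hμ hS)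
    (fun x y => mul_nonneg hμ (expExcess_nonneg H hδ x y)) (fun x y => by rw [expExcess_comm hH])
    (fun x => (hsum x).mul_left μ)
    (fun x => by rw [tsum_mul_left]; exact mul_le_mul_of_nonneg_left (hbound x) hμ) hK v

lemma norm_entry_conj_sub_le (H : ℓ²(ι, ℂ) →L[ℂ] ℓ²(ι, ℂ)) {w : ι → ℝ}
    (hw : BddAbove (Set.range w)) (hw' : BddAbove (Set.range (-w))) {δ μ : ℝ} (hμ₀ : 0 ≤ μ)
    (hμ₁ : μ ≤ 1) (hlip : ∀ s t, |w s - w t| ≤ μ * δ * dist s t) (s t : ι) :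
    ‖entry (mulCLM (expWeight w hw) ∘L H ∘L mulCLM (expWeight (-w) hw') - H) s t‖
      ≤ μ * expExcess H δ s t := by
  have : entry (mulCLM (expWeight w hw) ∘L H ∘L mulCLM (expWeight (-w) hw') - H) s t
      = ((Real.exp (w s - w t) - 1 : ℝ) : ℂ) * entry H s t := by
    rw [entry_sub, entry_mulCLM_comp_comp_mulCLM, expWeight_apply, expWeight_apply, Pi.neg_apply,
      sub_eq_add_neg (w s), Real.exp_add]
    push_cast
    ring
  rw [this, norm_mul, Complex.norm_real, Real.norm_eq_abs, expExcess, mul_left_comm, mul_comm]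
  gcongr
  exact abs_exp_sub_one_le_mul hμ₀ hμ₁ ((hlip s t).trans_eq (mul_assoc _ _ _))

theorem norm_entry_le_of_comp_eq_id {H G : ℓ²(ι, ℂ) →L[ℂ] ℓ²(ι, ℂ)} {δ S μ ε : ℝ} {z : ℂ}
    (hH : ∀ x y, entry H x y = conj (entry H y x)) (hδ : 0 ≤ δ) (hS : 0 ≤ S)
    (hsum : ∀ x, Summable (expExcess H δ x)) (hbound : ∀ x, ∑' y, expExcess H δ x y ≤ S)
    (hμ₀ : 0 ≤ μ) (hμ₁ : μ ≤ 1) (hε : 0 < ε) (hεS : 2 * S * μ ≤ ε) (hz : z.im = ε)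
    (hG : (z • ContinuousLinearMap.id ℂ ℓ²(ι, ℂ) - H) ∘L G = ContinuousLinearMap.id ℂ ℓ²(ι, ℂ))
    (x y : ι) : ‖entry G x y‖ ≤ 2 / ε * Real.exp (-μ * δ * dist x y) := by
  set n := μ * δ * dist x y
  -- truncating at `n` keeps `e^{± w}` bounded without changing `w x`
  set w : ι → ℝ := fun t => min (μ * δ * dist t y) n
  have hw_nonneg (t : ι) : 0 ≤ w t := by positivity
  have hw : BddAbove (Set.range w) := ⟨n, by rintro _ ⟨t, rfl⟩; exact min_le_right _ _⟩
  have hw' : BddAbove (Set.range (-w)) := ⟨0, by rintro _ ⟨t, rfl⟩; simpa using hw_nonneg t⟩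
  set f := expWeight w hw
  set g := expWeight (-w) hw'
  have hfg (i : ι) : f i * g i = 1 := by simp [f, g, ← Complex.exp_add]
  set R := mulCLM f ∘L G ∘L mulCLM g
  have hA (v : ℓ²(ι, ℂ)) : ε * ‖v‖ ≤ ‖(z • ContinuousLinearMap.id ℂ ℓ²(ι, ℂ) - H) v‖ := by
    simpa [hz, abs_of_pos hε] using
      abs_im_mul_norm_le_norm_smul_sub (isSelfAdjoint_of_entry_eq_conj hH) z v
  have hK (v : ℓ²(ι, ℂ)) : ‖(mulCLM f ∘L H ∘L mulCLM g - H) v‖ ≤ μ * S * ‖v‖ :=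
    norm_apply_le_of_norm_entry_le_expExcess hH hδ hS hμ₀ hsum hbound
      (norm_entry_conj_sub_le H hw hw' hμ₀ hμ₁ (abs_min_sub_min_le_mul_dist (by positivity) y n)) v
  have hR : ‖R (lp.single 2 y 1)‖ ≤ 2 / ε := by
    have := mul_norm_le_of_sub_comp_eq_id hA hK (conj_resolvent_comp_conj hG hfg)
      (lp.single 2 y 1)
    rw [lp.norm_single (by norm_num), norm_one] at this
    rw [le_div_iff₀ hε]
    nlinarith [mul_nonneg (by linarith : 0 ≤ ε / 2 - μ * S) (norm_nonneg (R (lp.single 2 y 1)))]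
  have hRxy : entry R x y = Real.exp n * entry G x y := by
    have hwx : w x = n := min_self n
    have hwy : w y = 0 := by simp [w, n]; positivity
    simp [R, entry_mulCLM_comp_comp_mulCLM, f, g, hwx, hwy]
  calc ‖entry G x y‖ = Real.exp (-n) * ‖entry R x y‖ := by
        rw [hRxy, norm_mul, Complex.norm_real, Real.norm_of_nonneg (Real.exp_pos n).le,
          ← mul_assoc, ← Real.exp_add, neg_add_cancel, Real.exp_zero, one_mul]
    _ ≤ Real.exp (-n) * (2 / ε) := by
        gcongr
        exact (lp.norm_apply_le_norm two_ne_zero _ x).trans hR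
    _ = 2 / ε * Real.exp (-μ * δ * dist x y) := by rw [mul_comm, neg_mul, neg_mul]

end Metric

end

end CombesThomas

/-- Combes–Thomas estimate on `ℓ²(ℤ)`. -/
theorem stmt18
    (H : lp (fun _ : ℤ => ℂ) 2 →L[ℂ] lp (fun _ : ℤ => ℂ) 2)
    (Hm : ℤ → ℤ → ℂ) (hHm : ∀ x y : ℤ, Hm x y = (H (lp.single 2 y (1:ℂ)) : ∀ _ : ℤ, ℂ) x)
    (hsa : ∀ x y : ℤ, Hm x y = (starRingEnd ℂ) (Hm y x))
    (δ S : ℝ) (hδ : 0 < δ) (hS : 0 < S)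
    (hsum : ∀ x : ℤ, Summable (fun y : ℤ =>
      ‖Hm x y‖ * (Real.exp (δ * |(x : ℝ) - (y : ℝ)|) - 1)))
    (hbound : ∀ x : ℤ, (∑' y : ℤ,
      ‖Hm x y‖ * (Real.exp (δ * |(x : ℝ) - (y : ℝ)|) - 1)) ≤ S)
    (E ε μ : ℝ) (hε : 0 < ε) (hμ : μ ∈ Set.Ioc (0:ℝ) 1) (hεS : 2 * S * μ ≤ ε) :
    ∃ G : lp (fun _ : ℤ => ℂ) 2 →L[ℂ] lp (fun _ : ℤ => ℂ) 2,
      ((((E : ℂ) + (ε : ℂ) * Complex.I) • ContinuousLinearMap.id ℂ (lp (fun _ : ℤ => ℂ) 2)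
          - H).comp G = ContinuousLinearMap.id ℂ _) ∧
      (G.comp (((E : ℂ) + (ε : ℂ) * Complex.I) • ContinuousLinearMap.id ℂ (lp (fun _ : ℤ => ℂ) 2)
          - H) = ContinuousLinearMap.id ℂ _) ∧
      ∀ x y : ℤ, ‖(G (lp.single 2 y (1:ℂ)) : ∀ _ : ℤ, ℂ) x‖
        ≤ (2/ε) * Real.exp (-μ * δ * |(x : ℝ) - (y : ℝ)|) := by
  obtain rfl : Hm = CombesThomas.entry H := funext₂ hHm
  simp only [← Int.dist_eq] at hsum hbound ⊢
  obtain ⟨G, hGl, hGr⟩ := CombesThomas.exists_inverse_smul_id_sub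
    (CombesThomas.isSelfAdjoint_of_entry_eq_conj hsa) (z := E + ε * Complex.I) (by simp [hε.ne'])
  exact ⟨G, hGl, hGr, CombesThomas.norm_entry_le_of_comp_eq_id hsa hδ.le hS.le hsum hbound
    hμ.1.le hμ.2 hε hεS (by simp) hGl⟩
end

section
/- Boundedness of the potential weight: Let E be real with |E| ≤ √(32/9), 𝓔 = E/2 - i√(1-E²/4), and define for (λ₁,λ₂) ∈ ℝ², λ₁ ≠ conj(𝓔): e^{-V(λ)} := ((conj(𝓔) - iλ₂)/(conj(𝓔) - λ₁)) · exp(-½(λ₁² + λ₂²) - 𝓔(λ₁ - iλ₂)). Then |e^{-V(λ)}| ≤ 1 for all such λ; equivalently, Re V(λ) ≥ 0, with equality exactly at λ = (0,0) and λ = (0, 2√(1 - E²/4)). -/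
open Complex

/-!
Write `ℰ = a - i b` with `a² + b² = 1`. Then `|e^{-V(x, y)}|² = g(u) / h(x)` with
`u = |conj ℰ - i y|² = 1 - 2 b y + y²`, `g(u) = u e^{1-u}` and
`h(x) = |conj ℰ - x|² e^{x² + 2 a x} = (1 - 2 a x + x²) e^{x² + 2 a x}`.
Always `g(u) ≤ 1`, with equality iff `u = 1`, i.e. `y ∈ {0, 2 b}`. Moreover
`h'(x) = 2 x ((x - a/2)² + (8 - 9 a²)/4) e^{x² + 2 a x}`, so when `a² = E²/4 ≤ 8/9` the derivative
has the sign of `x` except possibly at `x = a/2`; hence `h(x) > h(0) = 1` for `x ≠ 0`.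
-/

theorem Real.mul_exp_one_sub_le_one (u : ℝ) : u * Real.exp (1 - u) ≤ 1 :=
  calc u * Real.exp (1 - u) ≤ Real.exp (u - 1) * Real.exp (1 - u) := by
        gcongr; linarith [Real.add_one_le_exp (u - 1)]
    _ = 1 := by rw [← Real.exp_add]; simp

theorem Real.mul_exp_one_sub_lt_one {u : ℝ} (hu : u ≠ 1) : u * Real.exp (1 - u) < 1 :=
  calc u * Real.exp (1 - u) < Real.exp (u - 1) * Real.exp (1 - u) := by
        gcongr; linarith [Real.add_one_lt_exp (x := u - 1) (sub_ne_zero.2 hu)]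
    _ = 1 := by rw [← Real.exp_add]; simp

theorem Real.mul_exp_one_sub_eq_one_iff {u : ℝ} : u * Real.exp (1 - u) = 1 ↔ u = 1 :=
  ⟨fun h => by_contra fun hu => (Real.mul_exp_one_sub_lt_one hu).ne h, by rintro rfl; simp⟩

theorem strictMonoOn_of_hasDerivAt_pos_of_ne {D : Set ℝ} (hD : Convex ℝ D) {f f' : ℝ → ℝ}
    (hf : ∀ x, HasDerivAt f (f' x) x) (c : ℝ) (hf' : ∀ x ∈ interior D, x ≠ c → 0 < f' x) :
    StrictMonoOn f D := by
  intro x hx y hy hxy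
  have hsub : Set.Icc x y ⊆ D := hD.ordConnected.out hx hy
  have key : ∀ u ∈ Set.Icc x y, ∀ v ∈ Set.Icc x y, u < v → c ∉ Set.Ioo u v → f u < f v := by
    intro u hu v hv huv hc
    refine strictMonoOn_of_hasDerivWithinAt_pos (convex_Icc u v)
      (fun z _ => (hf z).continuousAt.continuousWithinAt) (fun z _ => (hf z).hasDerivWithinAt)
      (fun z hz => ?_) (Set.left_mem_Icc.2 huv.le) (Set.right_mem_Icc.2 huv.le) huv
    rw [interior_Icc] at hz
    refine hf' z (interior_mono hsub ?_) (fun hzc => hc (hzc ▸ hz))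
    rw [interior_Icc]
    exact ⟨hu.1.trans_lt hz.1, hz.2.trans_le hv.2⟩
  by_cases hc : c ∈ Set.Ioo x y
  · have hcxy : c ∈ Set.Icc x y := Set.Ioo_subset_Icc_self hc
    exact (key x (Set.left_mem_Icc.2 hxy.le) c hcxy hc.1 (by simp)).trans
      (key c hcxy y (Set.right_mem_Icc.2 hxy.le) hc.2 (by simp))
  · exact key x (Set.left_mem_Icc.2 hxy.le) y (Set.right_mem_Icc.2 hxy.le) hxy hc

theorem hasDerivAt_quadratic_mul_exp (a t : ℝ) :
    HasDerivAt (fun t => (1 - 2 * a * t + t ^ 2) * Real.exp (t ^ 2 + 2 * a * t))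
      (2 * t * ((t - a / 2) ^ 2 + (8 - 9 * a ^ 2) / 4) * Real.exp (t ^ 2 + 2 * a * t)) t := by
  have hlin := (hasDerivAt_id' t).const_mul (2 * a)
  have hsq := hasDerivAt_pow 2 t
  refine (((hlin.const_sub 1).add hsq).mul (hsq.add hlin).exp).congr_deriv ?_
  simp only [Pi.add_apply, Nat.cast_ofNat]
  ring

theorem one_lt_quadratic_mul_exp_of_pos {a t : ℝ} (ha : a ^ 2 ≤ 8 / 9) (ht : 0 < t) :
    1 < (1 - 2 * a * t + t ^ 2) * Real.exp (t ^ 2 + 2 * a * t) := by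
  have hmono := strictMonoOn_of_hasDerivAt_pos_of_ne (convex_Ici 0)
    (hasDerivAt_quadratic_mul_exp a) (a / 2) fun s hs hsc => by
      rw [interior_Ici] at hs
      have : 0 < (s - a / 2) ^ 2 := by positivity [sub_ne_zero.2 hsc]
      have : (0 : ℝ) < s := hs
      have : 0 ≤ 8 - 9 * a ^ 2 := by linarith
      positivity
  simpa using hmono Set.self_mem_Ici ht.le ht

theorem one_lt_quadratic_mul_exp {a t : ℝ} (ha : a ^ 2 ≤ 8 / 9) (ht : t ≠ 0) :
    1 < (1 - 2 * a * t + t ^ 2) * Real.exp (t ^ 2 + 2 * a * t) := by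
  rcases ht.lt_or_gt with ht | ht
  · convert one_lt_quadratic_mul_exp_of_pos (a := -a) (by simpa using ha) (neg_pos.2 ht)
      using 3 <;> ring
  · exact one_lt_quadratic_mul_exp_of_pos ha ht

theorem one_le_quadratic_mul_exp {a : ℝ} (ha : a ^ 2 ≤ 8 / 9) (t : ℝ) :
    1 ≤ (1 - 2 * a * t + t ^ 2) * Real.exp (t ^ 2 + 2 * a * t) := by
  rcases eq_or_ne t 0 with rfl | ht
  · simp
  · exact (one_lt_quadratic_mul_exp ha ht).le

theorem quadratic_mul_exp_eq_one_iff {a t : ℝ} (ha : a ^ 2 ≤ 8 / 9) :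
    (1 - 2 * a * t + t ^ 2) * Real.exp (t ^ 2 + 2 * a * t) = 1 ↔ t = 0 :=
  ⟨fun h => by_contra fun ht => (one_lt_quadratic_mul_exp ha ht).ne' h, by rintro rfl; simp⟩

noncomputable def expNegV (ℰ : ℂ) (x y : ℝ) : ℂ :=
  ((starRingEnd ℂ) ℰ - I * (y : ℂ)) / ((starRingEnd ℂ) ℰ - (x : ℂ)) *
    exp (-(1/2 : ℂ) * ((x : ℂ) ^ 2 + (y : ℂ) ^ 2) - ℰ * ((x : ℂ) - I * (y : ℂ)))

theorem norm_expNegV_sq {ℰ : ℂ} (hℰ : normSq ℰ = 1) (x y : ℝ) :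
    ‖expNegV ℰ x y‖ ^ 2 =
      (1 + 2 * ℰ.im * y + y ^ 2) * Real.exp (1 - (1 + 2 * ℰ.im * y + y ^ 2)) /
        ((1 - 2 * ℰ.re * x + x ^ 2) * Real.exp (x ^ 2 + 2 * ℰ.re * x)) := by
  rw [normSq_apply] at hℰ
  have hnum : normSq ((starRingEnd ℂ) ℰ - I * y) = 1 + 2 * ℰ.im * y + y ^ 2 := by
    simp [normSq_apply]; linear_combination hℰ
  have hden : normSq ((starRingEnd ℂ) ℰ - x) = 1 - 2 * ℰ.re * x + x ^ 2 := by
    simp [normSq_apply]; linear_combination hℰ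
  have hre : 2 * (-(1/2 : ℂ) * ((x : ℂ) ^ 2 + (y : ℂ) ^ 2) - ℰ * ((x : ℂ) - I * (y : ℂ))).re =
      1 - (1 + 2 * ℰ.im * y + y ^ 2) - (x ^ 2 + 2 * ℰ.re * x) := by
    simp [← ofReal_pow]; ring
  rw [expNegV, norm_mul, norm_div, norm_exp, mul_pow, div_pow, Complex.sq_norm,
    Complex.sq_norm, hnum, hden, ← Real.exp_nat_mul, Nat.cast_ofNat, hre, Real.exp_sub,
    div_mul_div_comm]

theorem norm_expNegV_le_one {ℰ : ℂ} (hℰ : normSq ℰ = 1) (hre : ℰ.re ^ 2 ≤ 8 / 9) (x y : ℝ) :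
    ‖expNegV ℰ x y‖ ≤ 1 := by
  rw [← sq_le_one_iff₀ (norm_nonneg _), norm_expNegV_sq hℰ]
  exact div_le_one_of_le₀ ((Real.mul_exp_one_sub_le_one _).trans (one_le_quadratic_mul_exp hre x))
    (zero_le_one.trans (one_le_quadratic_mul_exp hre x))

theorem norm_expNegV_eq_one_iff {ℰ : ℂ} (hℰ : normSq ℰ = 1) (hre : ℰ.re ^ 2 ≤ 8 / 9) (x y : ℝ) :
    ‖expNegV ℰ x y‖ = 1 ↔ x = 0 ∧ (y = 0 ∨ y = -2 * ℰ.im) := by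
  have hG := Real.mul_exp_one_sub_le_one (1 + 2 * ℰ.im * y + y ^ 2)
  have hH := one_le_quadratic_mul_exp hre x
  rw [← pow_eq_one_iff_of_nonneg (norm_nonneg _) two_ne_zero, norm_expNegV_sq hℰ,
    div_eq_one_iff_eq (zero_lt_one.trans_le hH).ne']
  constructor
  · intro h
    refine ⟨(quadratic_mul_exp_eq_one_iff hre).1 (by linarith), ?_⟩
    have hu := (Real.mul_exp_one_sub_eq_one_iff (u := 1 + 2 * ℰ.im * y + y ^ 2)).1 (by linarith)
    have hy : y * (y + 2 * ℰ.im) = 0 := by linear_combination hu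
    rcases mul_eq_zero.1 hy with hy | hy
    · exact Or.inl hy
    · exact Or.inr (by linarith)
  · rintro ⟨rfl, hy⟩
    have hu : 1 + 2 * ℰ.im * y + y ^ 2 = 1 := by rcases hy with rfl | rfl <;> ring
    simp [hu]

/-- `|e^{-V}| ≤ 1` for `|E| ≤ √(32/9)`, with equality exactly at the two minima of `Re V`. -/
theorem stmt19 (E : ℝ) (hE : |E| ≤ Real.sqrt (32/9)) :
    let ℰ : ℂ := (E/2 : ℝ) - Complex.I * (Real.sqrt (1 - E^2/4) : ℝ);
    let eV : ℝ × ℝ → ℂ := fun l =>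
      (((starRingEnd ℂ) ℰ - Complex.I * (l.2 : ℂ)) / ((starRingEnd ℂ) ℰ - (l.1 : ℂ))) *
        Complex.exp (-(1/2 : ℂ) * ((l.1 : ℂ)^2 + (l.2 : ℂ)^2)
          - ℰ * ((l.1 : ℂ) - Complex.I * (l.2 : ℂ)));
    ∀ l : ℝ × ℝ, ‖eV l‖ ≤ 1 ∧
      (‖eV l‖ = 1 ↔ l = (0, 0) ∨ l = (0, 2 * Real.sqrt (1 - E^2/4))) := by
  intro ℰ eV ⟨x, y⟩
  have hE2 : E ^ 2 ≤ 32 / 9 := by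
    rw [← sq_abs, ← Real.le_sqrt (abs_nonneg E) (by norm_num)]
    exact hE
  have hre : ℰ.re = E / 2 := by simp [ℰ]
  have him : ℰ.im = -Real.sqrt (1 - E ^ 2 / 4) := by simp [ℰ]
  have hnorm : normSq ℰ = 1 := by
    rw [normSq_apply, hre, him, neg_mul_neg, Real.mul_self_sqrt (by linarith)]
    ring
  have hre2 : ℰ.re ^ 2 ≤ 8 / 9 := by rw [hre]; linarith
  refine ⟨norm_expNegV_le_one hnorm hre2 x y, ?_⟩
  rw [show eV (x, y) = expNegV ℰ x y from rfl, norm_expNegV_eq_one_iff hnorm hre2, him]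
  simp only [Prod.mk.injEq, neg_mul_neg]
  tauto
end
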